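/- Let H be a complex Hilbert space and let T, A, S be bounded operators on H with polar decompositions T = U_T|T|, A = U_A|A|, S = U_S|S|. Set Y = |T|·A·|S*| and W = U_T*U_T U_A U_S U_S*. Then Y = W|Y| holds if and only if U_A*Y is positive and U_A U_A* Y = Y. -/

import Mathlib

/-!
Pointwise `‖|Y| x‖ = ‖Y x‖`. If `Y = E U F |Y|` with star projections `E`, `F` and a contraction
`U`, then along `v = |Y| x` each of `F`, `U`, `E` preserves the norm, so `F v = v`,
`E (U v) = U v` and `U* U v = v`; hence `Y = U |Y|` and `U* Y = |Y| ≥ 0`. Conversely `U* Y ≥ 0`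
and `U U* Y = Y` give `Y* Y = (U* Y)²`, so `|Y| = U* Y`. For `Y = |T| A |S*|`, `E = U_T* U_T`
and `F = U_S U_S*` act trivially on `Y` from the left and right, since `|B|` vanishes wherever
`B` does.
-/

open ContinuousLinearMap

noncomputable def absOp {H K : Type*} [NormedAddCommGroup H] [InnerProductSpace ℂ H]
    [CompleteSpace H] [NormedAddCommGroup K] [InnerProductSpace ℂ K] [CompleteSpace K]
    (T : H →L[ℂ] K) : H →L[ℂ] H :=
  CFC.sqrt (ContinuousLinearMap.adjoint T ∘L T)

noncomputable def projCR {H K : Type*} [NormedAddCommGroup H] [InnerProductSpace ℂ H]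
    [CompleteSpace H] [NormedAddCommGroup K] [InnerProductSpace ℂ K] [CompleteSpace K]
    (C : K →L[ℂ] H) : H →L[ℂ] H :=
  letI := (LinearMap.range (C : K →ₗ[ℂ] H)).topologicalClosure.isClosed_topologicalClosure.completeSpace_coe
  (LinearMap.range (C : K →ₗ[ℂ] H)).topologicalClosure.subtypeL ∘L
    Submodule.orthogonalProjectionOnto (LinearMap.range (C : K →ₗ[ℂ] H)).topologicalClosure

/-- `B = U|B|` is the polar decomposition: `U` is a partial isometry (automatic) whose
initial projection `U*U` is the orthogonal projection onto the closure of `range B*`. -/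
noncomputable def IsPolarDecomp {H K : Type*} [NormedAddCommGroup H] [InnerProductSpace ℂ H]
    [CompleteSpace H] [NormedAddCommGroup K] [InnerProductSpace ℂ K] [CompleteSpace K]
    (B U : H →L[ℂ] K) : Prop :=
  B = U ∘L absOp B ∧
    ContinuousLinearMap.adjoint U ∘L U = projCR (ContinuousLinearMap.adjoint B)

variable {H : Type*} [NormedAddCommGroup H] [InnerProductSpace ℂ H] [CompleteSpace H]

section
variable {K : Type*} [NormedAddCommGroup K] [InnerProductSpace ℂ K] [CompleteSpace K]

lemma absOp_nonneg (B : H →L[ℂ] K) : 0 ≤ absOp B := CFC.sqrt_nonneg _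

lemma isSelfAdjoint_absOp (B : H →L[ℂ] K) : IsSelfAdjoint (absOp B) :=
  .of_nonneg (absOp_nonneg B)

lemma absOp_comp_absOp (B : H →L[ℂ] K) : absOp B ∘L absOp B = adjoint B ∘L B :=
  CFC.sqrt_mul_sqrt_self _ ((nonneg_iff_isPositive _).mpr (isPositive_adjoint_comp_self B))

lemma norm_absOp_apply (B : H →L[ℂ] K) (x : H) : ‖absOp B x‖ = ‖B x‖ := by
  have h : ‖absOp B x‖ ^ 2 = ‖B x‖ ^ 2 := by
    rw [← inner_self_eq_norm_sq (𝕜 := ℂ), ← inner_self_eq_norm_sq (𝕜 := ℂ),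
      ← adjoint_inner_right, (isSelfAdjoint_absOp B).adjoint_eq, ← comp_apply (absOp B),
      absOp_comp_absOp, comp_apply, adjoint_inner_right]
  exact (sq_eq_sq₀ (norm_nonneg _) (norm_nonneg _)).mp h

lemma absOp_comp_eq_of_comp_eq {B : H →L[ℂ] K} {p : H →L[ℂ] H} (h : B ∘L p = B) :
    absOp B ∘L p = absOp B := by
  ext x
  have hB : B (p x - x) = 0 := by
    rw [map_sub, ← comp_apply, h, sub_self]
  have hB' : absOp B (p x - x) = 0 := by
    rw [← norm_eq_zero, norm_absOp_apply, hB, norm_zero]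
  rwa [map_sub, sub_eq_zero] at hB'

lemma comp_absOp_eq_of_comp_eq {B : H →L[ℂ] K} {p : H →L[ℂ] H} (hp : IsSelfAdjoint p)
    (h : B ∘L p = B) : p ∘L absOp B = absOp B := by
  simpa only [adjoint_comp, hp.adjoint_eq, (isSelfAdjoint_absOp B).adjoint_eq] using
    congrArg adjoint (absOp_comp_eq_of_comp_eq h)

lemma adjoint_apply_apply_eq_of_norm_apply_eq {V : H →L[ℂ] K} (hV : ‖V‖ ≤ 1) {v : H}
    (h : ‖V v‖ = ‖v‖) : adjoint V (V v) = v := by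
  have hle : ‖adjoint V (V v)‖ ≤ ‖V v‖ := by
    simpa using (adjoint V).le_of_opNorm_le (c := 1) (by rwa [LinearIsometryEquiv.norm_map]) (V v)
  have hsq : ‖v - adjoint V (V v)‖ ^ 2 ≤ 0 := by
    rw [norm_sub_sq (𝕜 := ℂ), adjoint_inner_right, inner_self_eq_norm_sq, h]
    nlinarith [norm_nonneg (adjoint V (V v))]
  rw [eq_comm, ← sub_eq_zero, ← norm_eq_zero]
  exact pow_eq_zero_iff two_ne_zero |>.mp (hsq.antisymm (sq_nonneg _))

lemma norm_le_one_of_isStarProjection_adjoint_comp_self {U : H →L[ℂ] K}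
    (hU : IsStarProjection (adjoint U ∘L U)) : ‖U‖ ≤ 1 := by
  have h := hU.norm_le _
  rw [norm_adjoint_comp_self] at h
  nlinarith [norm_nonneg U]

lemma comp_adjoint_comp_self_of_isStarProjection {U : H →L[ℂ] K}
    (hU : IsStarProjection (adjoint U ∘L U)) : U ∘L (adjoint U ∘L U) = U := by
  set P := adjoint U ∘L U
  ext x
  have hP : P (P x - x) = 0 := by
    rw [map_sub, ← comp_apply P, ← mul_def, hU.isIdempotentElem.eq, sub_self]
  have hU0 : ‖U (P x - x)‖ ^ 2 = 0 := by
    rw [← inner_self_eq_norm_sq (𝕜 := ℂ), ← adjoint_inner_right, ← comp_apply (adjoint U), hP,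
      inner_zero_right, map_zero]
  rw [comp_apply, ← sub_eq_zero, ← map_sub]
  simpa using hU0

lemma isStarProjection_comp_adjoint_of_isStarProjection {U : H →L[ℂ] K}
    (hU : IsStarProjection (adjoint U ∘L U)) : IsStarProjection (U ∘L adjoint U) := by
  refine ⟨?_, ?_⟩
  · rw [IsIdempotentElem, mul_def, ← comp_assoc, comp_assoc U (adjoint U) U,
      comp_adjoint_comp_self_of_isStarProjection hU]
  · rw [IsSelfAdjoint, star_eq_adjoint, adjoint_comp, adjoint_adjoint]

lemma isStarProjection_projCR (C : K →L[ℂ] H) : IsStarProjection (projCR C) :=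
  let := (LinearMap.range (C : K →ₗ[ℂ] H)).topologicalClosure.isClosed_topologicalClosure
    |>.completeSpace_coe
  isStarProjection_starProjection

lemma projCR_comp_self (C : K →L[ℂ] H) : projCR C ∘L C = C := by
  let := (LinearMap.range (C : K →ₗ[ℂ] H)).topologicalClosure.isClosed_topologicalClosure
    |>.completeSpace_coe
  ext x
  exact Submodule.starProjection_eq_self_iff.mpr
    (Submodule.le_topologicalClosure _ (LinearMap.mem_range_self _ x))

namespace IsPolarDecomp

variable {B U : H →L[ℂ] K}

lemma isStarProjection (hB : IsPolarDecomp B U) : IsStarProjection (adjoint U ∘L U) :=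
  hB.2 ▸ isStarProjection_projCR _

lemma comp_adjoint_comp_self (hB : IsPolarDecomp B U) : B ∘L (adjoint U ∘L U) = B := by
  simpa only [adjoint_comp, adjoint_adjoint, (isStarProjection_projCR _).isSelfAdjoint.adjoint_eq,
    hB.2] using congrArg adjoint (projCR_comp_self (adjoint B))

lemma adjoint_comp_self_comp_absOp (hB : IsPolarDecomp B U) :
    (adjoint U ∘L U) ∘L absOp B = absOp B :=
  comp_absOp_eq_of_comp_eq hB.isStarProjection.isSelfAdjoint hB.comp_adjoint_comp_self

lemma absOp_adjoint_comp_comp_adjoint (hB : IsPolarDecomp B U) :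
    absOp (adjoint B) ∘L (U ∘L adjoint U) = absOp (adjoint B) := by
  refine absOp_comp_eq_of_comp_eq ?_
  have h : (U ∘L adjoint U) ∘L B = B := by
    conv_lhs => rw [hB.1]
    rw [← comp_assoc, comp_assoc U, comp_adjoint_comp_self_of_isStarProjection hB.isStarProjection,
      ← hB.1]
  simpa only [adjoint_comp, adjoint_adjoint] using congrArg adjoint h

end IsPolarDecomp

end

lemma absOp_eq_of_adjoint_comp_self_eq {B P : H →L[ℂ] H} (hP : 0 ≤ P)
    (h : adjoint B ∘L B = P ∘L P) : absOp B = P := by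
  rw [absOp, h, ← mul_def, ← sq, CFC.sqrt_sq P hP]

lemma IsStarProjection.apply_eq_self_of_norm_apply_eq {P : H →L[ℂ] H} (hP : IsStarProjection P)
    {v : H} (h : ‖P v‖ = ‖v‖) : P v = v := by
  have := adjoint_apply_apply_eq_of_norm_apply_eq (hP.norm_le P) h
  rwa [hP.isSelfAdjoint.adjoint_eq, ← comp_apply, ← mul_def, hP.isIdempotentElem.eq] at this

section
variable {E F U Y : H →L[ℂ] H}

lemma comp_absOp_eq_and_adjoint_comp_eq_absOp (hE : IsStarProjection E)
    (hF : IsStarProjection F) (hU : ‖U‖ ≤ 1) (h : Y = (E ∘L U ∘L F) ∘L absOp Y) :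
    U ∘L absOp Y = Y ∧ adjoint U ∘L Y = absOp Y := by
  suffices key : ∀ x, U (absOp Y x) = Y x ∧ adjoint U (Y x) = absOp Y x from
    ⟨ext fun x ↦ (key x).1, ext fun x ↦ (key x).2⟩
  intro x
  set v := absOp Y x
  have hYx : Y x = E (U (F v)) := by simpa only [comp_apply] using congr($h x)
  have hEUF : ‖E (U (F v))‖ = ‖v‖ := by rw [← hYx, norm_absOp_apply]
  have hE_le : ‖E (U (F v))‖ ≤ ‖U (F v)‖ := by
    simpa using E.le_of_opNorm_le (hE.norm_le E) (U (F v))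
  have hU_le : ‖U (F v)‖ ≤ ‖F v‖ := by simpa using U.le_of_opNorm_le hU (F v)
  have hF_le : ‖F v‖ ≤ ‖v‖ := by simpa using F.le_of_opNorm_le (hF.norm_le F) v
  have hFv : F v = v := hF.apply_eq_self_of_norm_apply_eq (by linarith)
  rw [hFv] at hYx hEUF hE_le hU_le
  have hEUv : E (U v) = U v := hE.apply_eq_self_of_norm_apply_eq (by linarith)
  have hUv : adjoint U (U v) = v := adjoint_apply_apply_eq_of_norm_apply_eq hU (by linarith)
  exact ⟨by rw [hYx, hEUv], by rw [hYx, hEUv, hUv]⟩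

lemma eq_comp_absOp_of_isPositive (hF : IsSelfAdjoint F) (hEY : E ∘L Y = Y) (hYF : Y ∘L F = Y)
    (hpos : (adjoint U ∘L Y).IsPositive) (hUY : U ∘L adjoint U ∘L Y = Y) :
    Y = (E ∘L U ∘L F) ∘L absOp Y := by
  have habs : absOp Y = adjoint U ∘L Y := by
    refine absOp_eq_of_adjoint_comp_self_eq ((nonneg_iff_isPositive _).mpr hpos) ?_
    calc adjoint Y ∘L Y = adjoint Y ∘L U ∘L adjoint U ∘L Y := by rw [hUY]
      _ = adjoint (adjoint U ∘L Y) ∘L adjoint U ∘L Y := by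
        rw [adjoint_comp, adjoint_adjoint, comp_assoc]
      _ = (adjoint U ∘L Y) ∘L adjoint U ∘L Y := by rw [hpos.isSelfAdjoint.adjoint_eq]
  have hFY : F ∘L absOp Y = absOp Y := comp_absOp_eq_of_comp_eq hF hYF
  calc Y = E ∘L U ∘L adjoint U ∘L Y := by rw [hUY, hEY]
    _ = (E ∘L U ∘L F) ∘L absOp Y := by rw [← habs, comp_assoc, comp_assoc, hFY]

theorem eq_comp_absOp_iff (hE : IsStarProjection E) (hF : IsStarProjection F) (hU : ‖U‖ ≤ 1)
    (hEY : E ∘L Y = Y) (hYF : Y ∘L F = Y) :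
    Y = (E ∘L U ∘L F) ∘L absOp Y ↔
      (adjoint U ∘L Y).IsPositive ∧ U ∘L adjoint U ∘L Y = Y := by
  refine ⟨fun h ↦ ?_, fun ⟨hpos, hUY⟩ ↦
    eq_comp_absOp_of_isPositive hF.isSelfAdjoint hEY hYF hpos hUY⟩
  obtain ⟨hUabs, habs⟩ := comp_absOp_eq_and_adjoint_comp_eq_absOp hE hF hU h
  exact ⟨habs ▸ (nonneg_iff_isPositive _).mp (absOp_nonneg Y), by rw [habs, hUabs]⟩

end

theorem stmt11 (T A S U_T U_A U_S : H →L[ℂ] H)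
    (hT : IsPolarDecomp T U_T) (hA : IsPolarDecomp A U_A) (hS : IsPolarDecomp S U_S) :
    absOp T ∘L A ∘L absOp (ContinuousLinearMap.adjoint S) =
        (ContinuousLinearMap.adjoint U_T ∘L U_T ∘L U_A ∘L U_S ∘L
            ContinuousLinearMap.adjoint U_S) ∘L
          absOp (absOp T ∘L A ∘L absOp (ContinuousLinearMap.adjoint S)) ↔
      (ContinuousLinearMap.adjoint U_A ∘L
          (absOp T ∘L A ∘L absOp (ContinuousLinearMap.adjoint S))).IsPositive ∧
        U_A ∘L ContinuousLinearMap.adjoint U_A ∘L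
            (absOp T ∘L A ∘L absOp (ContinuousLinearMap.adjoint S)) =
          absOp T ∘L A ∘L absOp (ContinuousLinearMap.adjoint S) := by
  have hEY : (adjoint U_T ∘L U_T) ∘L absOp T ∘L A ∘L absOp (adjoint S) =
      absOp T ∘L A ∘L absOp (adjoint S) := by
    rw [← comp_assoc, hT.adjoint_comp_self_comp_absOp]
  have hYF : (absOp T ∘L A ∘L absOp (adjoint S)) ∘L U_S ∘L adjoint U_S =
      absOp T ∘L A ∘L absOp (adjoint S) := by
    rw [comp_assoc, comp_assoc, hS.absOp_adjoint_comp_comp_adjoint]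
  simpa only [comp_assoc] using eq_comp_absOp_iff hT.isStarProjection
    (isStarProjection_comp_adjoint_of_isStarProjection hS.isStarProjection)
    (norm_le_one_of_isStarProjection_adjoint_comp_self hA.isStarProjection) hEY hYF
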